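/- arXiv:2601.06014 — 2 statements merged into one kernel-verified Lean document; each statement's English description precedes it below -/
import Mathlib

section
/- Let n, r be positive integers and let k be an integer with -r < k < 0. Let P = ρ_n X Xᵀ be an n×n real symmetric positive semidefinite matrix of rank r with nonzero eigenvalues s₁ ≥ ⋯ ≥ s_r > 0 and spectral decomposition P = U_{1:r} S_{1:r} U_{1:r}ᵀ, so that ρ_n^{1/2} X = U_{1:r} S_{1:r}^{1/2}. Let A = P + E be any real symmetric n×n matrix, let X̂_{1:r+k} be the (r+k)-dimensional adjacency spectral embedding of A, and let X̂°_{1:r} ∈ ℝ^{n×r} denote X̂_{1:r+k} padded on the right with |k| columns of zeros. Then the minimum over orthogonal matrices W ∈ O(r) of ‖X̂°_{1:r} W − ρ_n^{1/2} X_{1:r}‖_{2,∞} is at least sqrt( Σ_{j=r+k+1}^{r} s_j / n ). -/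
/-
The embedding `X̂°W` has rank at most `d = r + k`, so the kernel of `(X̂°W)ᵀ U` contains `r - d`
orthonormal vectors, the columns of a matrix `C`. The columns of `U C` are orthonormal and
orthogonal to the range of `X̂°W`, so projecting the error `X̂°W - U S^{1/2}` onto them (Bessel)
bounds its squared Frobenius norm below by `∑_q s_q t_q`, where the squared row norms `t_q` of `C`
lie in `[0, 1]` and add up to `r - d`. Since `s` is nonincreasing, such a weighted sum is at least
the sum of the `r - d` smallest `s_q`. Finally, the squared `(2,∞)`-norm of an `n`-row matrix is
at least `1/n` times its squared Frobenius norm.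
-/

open Matrix

noncomputable section

def twoInfNorm {m n : ℕ} (Z : Matrix (Fin m) (Fin n) ℝ) : ℝ :=
  ⨆ i : Fin m, Real.sqrt (∑ j, Z i j ^ 2)

open Finset

theorem sum_sq_eq_trace_transpose_mul {m n : Type*} [Fintype m] [Fintype n] (N : Matrix m n ℝ) :
    ∑ i, ∑ j, N i j ^ 2 = (Nᵀ * N).trace := by
  simp only [trace, Matrix.diag, mul_apply, transpose_apply, sq]
  exact sum_comm

/-- Bessel's inequality for the orthonormal columns of `V`: `P = 1 - V Vᵀ` is an orthogonal
projection, so `‖M‖² - ‖Vᵀ M‖² = tr (Mᵀ P M) = ‖P M‖² ≥ 0`. -/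
theorem sum_sq_transpose_mul_le {m n l : Type*} [Fintype m] [Fintype n] [Fintype l]
    [DecidableEq m] [DecidableEq n] {V : Matrix m n ℝ} (hV : Vᵀ * V = 1) (M : Matrix m l ℝ) :
    ∑ i, ∑ j, (Vᵀ * M) i j ^ 2 ≤ ∑ i, ∑ j, M i j ^ 2 := by
  set P : Matrix m m ℝ := 1 - V * Vᵀ
  have hP : Pᵀ * P = P := by
    have hidem : V * Vᵀ * (V * Vᵀ) = V * Vᵀ := by
      rw [Matrix.mul_assoc, ← Matrix.mul_assoc Vᵀ, hV, Matrix.one_mul]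
    simp [P, transpose_sub, Matrix.sub_mul, Matrix.mul_sub, hidem]
  have h0 : 0 ≤ ∑ i, ∑ j, (P * M) i j ^ 2 := by positivity
  rw [sum_sq_eq_trace_transpose_mul, transpose_mul, Matrix.mul_assoc, ← Matrix.mul_assoc _ P,
    hP] at h0
  rw [sum_sq_eq_trace_transpose_mul, sum_sq_eq_trace_transpose_mul]
  simpa [P, Matrix.mul_sub, Matrix.sub_mul, transpose_mul, Matrix.mul_assoc] using h0

theorem sum_row_sq_le_one {m n : Type*} [Fintype m] [Fintype n] [DecidableEq m] [DecidableEq n]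
    {V : Matrix m n ℝ} (hV : Vᵀ * V = 1) (p : m) : ∑ j, V p j ^ 2 ≤ 1 := by
  simpa [Matrix.single_apply, ite_pow] using
    sum_sq_transpose_mul_le hV (Matrix.single p () (1 : ℝ))

theorem sum_le_sum_mul_of_threshold {ι : Type*} [Fintype ι] [DecidableEq ι] {T : Finset ι}
    {s t : ι → ℝ} (c : ℝ) (hT : ∀ i ∈ T, s i ≤ c) (hTc : ∀ i ∉ T, c ≤ s i)
    (ht₀ : ∀ i, 0 ≤ t i) (ht₁ : ∀ i, t i ≤ 1) (ht : ∑ i, t i = #T) :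
    ∑ i ∈ T, s i ≤ ∑ i, s i * t i := by
  -- termwise, `s i - c` and `𝟙_T i - t i` have opposite signs
  have key : ∑ i, (s i - c) * ((if i ∈ T then 1 else 0) - t i) ≤ 0 := by
    refine sum_nonpos fun i _ => ?_
    split_ifs with hi
    · exact mul_nonpos_of_nonpos_of_nonneg (by linarith [hT i hi]) (by linarith [ht₁ i])
    · exact mul_nonpos_of_nonneg_of_nonpos (by linarith [hTc i hi]) (by linarith [ht₀ i])
  simp only [mul_sub, sub_mul, mul_ite, mul_one, mul_zero, sum_sub_distrib, sum_ite_mem,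
    univ_inter, ← mul_sum, ht, sum_const, nsmul_eq_mul] at key
  linarith

theorem exists_orthonormal_cols_mul_eq_zero {κ : Type*} [Fintype κ] {r d : ℕ}
    (G : Matrix κ (Fin r) ℝ) (hG : G.rank ≤ d) :
    ∃ C : Matrix (Fin r) (Fin (r - d)) ℝ, Cᵀ * C = 1 ∧ G * C = 0 := by
  have hK : r - d ≤ Module.finrank ℝ (LinearMap.ker (toEuclideanLin G)) := by
    have hrank : G.rank = Module.finrank ℝ (LinearMap.range (toEuclideanLin G)) := by
      rw [toEuclideanLin_eq_toLin_orthonormal, ← rank_eq_finrank_range_toLin]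
    have h := LinearMap.finrank_range_add_finrank_ker (toEuclideanLin G)
    rw [finrank_euclideanSpace_fin] at h
    omega
  let b := stdOrthonormalBasis ℝ (LinearMap.ker (toEuclideanLin G))
  refine ⟨of fun q i => (b (Fin.castLE hK i) : EuclideanSpace ℝ (Fin r)) q, ?_, ?_⟩
  · ext i i'
    have := (orthonormal_iff_ite.1 b.orthonormal) (Fin.castLE hK i) (Fin.castLE hK i')
    simp only [Submodule.coe_inner, PiLp.inner_apply, RCLike.inner_apply', conj_trivial,
      Fin.castLE_inj] at this
    simpa only [mul_apply, one_apply, transpose_apply, of_apply] using this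
  · ext p i
    have hv := congrArg WithLp.ofLp (LinearMap.mem_ker.1 (b (Fin.castLE hK i)).2)
    exact congrFun hv p

theorem rank_le_of_col_eq_zero {m : Type*} [Fintype m] {r d : ℕ} (Z : Matrix m (Fin r) ℝ)
    (hZ : ∀ i (j : Fin r), d ≤ (j : ℕ) → Z i j = 0) : Z.rank ≤ d := by
  classical
  have hfac : Z = Z * diagonal fun j : Fin r => if (j : ℕ) < d then (1 : ℝ) else 0 := by
    ext i j
    by_cases hj : (j : ℕ) < d
    · simp [hj]
    · simp [hj, hZ i j (not_lt.1 hj)]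
  calc Z.rank ≤ (diagonal fun j : Fin r => if (j : ℕ) < d then (1 : ℝ) else 0).rank := by
        rw [hfac]; exact rank_mul_le_right _ _
    _ = Fintype.card {j : Fin r // (j : ℕ) < d} := by
        rw [rank_diagonal]; simp
    _ ≤ d := by
        rw [Fintype.card_subtype, Fin.card_filter_val_lt]; exact min_le_right _ _

theorem sqrt_sum_sq_div_le_twoInfNorm {m n : ℕ} (Z : Matrix (Fin m) (Fin n) ℝ) :
    √((∑ i, ∑ j, Z i j ^ 2) / m) ≤ twoInfNorm Z := by
  have hnonneg : 0 ≤ twoInfNorm Z := Real.iSup_nonneg fun i => Real.sqrt_nonneg _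
  have hrow : ∀ i, ∑ j, Z i j ^ 2 ≤ twoInfNorm Z ^ 2 := fun i =>
    (Real.sqrt_le_iff.1 <|
      le_ciSup (f := fun i => √(∑ j, Z i j ^ 2)) (Set.finite_range _).bddAbove i).2
  refine Real.sqrt_le_iff.2 ⟨hnonneg, div_le_of_le_mul₀ (Nat.cast_nonneg _) (sq_nonneg _) ?_⟩
  calc ∑ i, ∑ j, Z i j ^ 2 ≤ ∑ _i : Fin m, twoInfNorm Z ^ 2 := sum_le_sum fun i _ => hrow i
    _ = twoInfNorm Z ^ 2 * m := by simp [mul_comm]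

theorem Fin.card_filter_le_val {r d : ℕ} :
    #(univ.filter fun j : Fin r => d ≤ (j : ℕ)) = r - d := by
  have h := card_filter_add_card_filter_not (s := (univ : Finset (Fin r)))
    (fun j : Fin r => (j : ℕ) < d)
  simp only [Fin.card_filter_val_lt, not_lt, card_univ, Fintype.card_fin] at h
  omega

theorem sum_filter_le_sum_sq_sub_of_rank_le {m : Type*} [Fintype m] [DecidableEq m] {r d : ℕ}
    (hdr : d < r) {U : Matrix m (Fin r) ℝ} (hU : Uᵀ * U = 1) {s : Fin r → ℝ}
    (hs₀ : ∀ j, 0 ≤ s j) (hs : Antitone s) {Z : Matrix m (Fin r) ℝ} (hZ : Z.rank ≤ d) :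
    ∑ j ∈ univ.filter (fun j : Fin r => d ≤ (j : ℕ)), s j ≤
      ∑ i, ∑ j, (Z - U * diagonal fun j => √(s j)) i j ^ 2 := by
  obtain ⟨C, hC, hZUC⟩ := exists_orthonormal_cols_mul_eq_zero (d := d) (Zᵀ * U) <|
    (rank_mul_le_left _ _).trans (by rwa [rank_transpose])
  have hUC : (U * C)ᵀ * (U * C) = 1 := by
    rw [transpose_mul, Matrix.mul_assoc, ← Matrix.mul_assoc Uᵀ, hU, Matrix.one_mul, hC]
  have hproj : (U * C)ᵀ * (Z - U * diagonal fun j => √(s j)) =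
      -(Cᵀ * diagonal fun j => √(s j)) := by
    have hZ0 : (U * C)ᵀ * Z = 0 := by
      rw [← transpose_transpose ((U * C)ᵀ * Z), transpose_mul, transpose_transpose,
        ← Matrix.mul_assoc, hZUC, transpose_zero]
    rw [Matrix.mul_sub, hZ0, transpose_mul, Matrix.mul_assoc, ← Matrix.mul_assoc Uᵀ, hU,
      Matrix.one_mul, zero_sub]
  calc ∑ j ∈ univ.filter (fun j : Fin r => d ≤ (j : ℕ)), s j
      ≤ ∑ q, s q * ∑ i, C q i ^ 2 := by
        refine sum_le_sum_mul_of_threshold (s ⟨d, hdr⟩) (fun q hq => hs ?_) (fun q hq => hs ?_)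
          (fun q => by positivity) (sum_row_sq_le_one hC) ?_
        · simpa [Fin.le_def] using hq
        · simpa [Fin.le_def] using le_of_lt (by simpa using hq)
        · rw [sum_sq_eq_trace_transpose_mul C, hC, trace_one, Fintype.card_fin,
            Fin.card_filter_le_val]
    _ = ∑ i, ∑ q, (-(Cᵀ * diagonal fun j => √(s j))) i q ^ 2 := by
        simp only [Matrix.neg_apply, neg_sq, mul_diagonal, transpose_apply, mul_pow,
          Real.sq_sqrt (hs₀ _), mul_sum]
        rw [sum_comm]
        simp only [mul_comm]
    _ ≤ ∑ i, ∑ j, (Z - U * diagonal fun j => √(s j)) i j ^ 2 := by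
        rw [← hproj]; exact sum_sq_transpose_mul_le hUC _

theorem stmt0_general
    (n r : ℕ) (hrn : r ≤ n)
    (k : ℤ) (hk₂ : k < 0)
    (d : ℕ) (hd : (d : ℤ) = (r : ℤ) + k)
    -- the rank-r psd matrix P = ρ • X Xᵀ and its spectral decomposition
    (ρ : ℝ)
    (X U : Matrix (Fin n) (Fin r) ℝ) (s : Fin r → ℝ)
    (hU : Uᵀ * U = 1)
    (hs_pos : ∀ j, 0 < s j) (hs_sorted : Antitone s)
    -- ρ^{1/2} X = U S^{1/2}
    (hX : Real.sqrt ρ • X = U * diagonal (fun j => Real.sqrt (s j)))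
    -- A = P + E is any real symmetric matrix, with spectral decomposition
    (Uhat : Matrix (Fin n) (Fin n) ℝ) (shat : Fin n → ℝ)
    -- the (r+k)-dimensional ASE of A, padded with |k| columns of zeros
    (Xhat : Matrix (Fin n) (Fin r) ℝ)
    (hXhat : Xhat = Matrix.of fun i (j : Fin r) =>
      if (j : ℕ) < d then
        Uhat i (Fin.castLE hrn j) * Real.sqrt |shat (Fin.castLE hrn j)|
      else 0) :
    ∀ W : Matrix (Fin r) (Fin r) ℝ, Wᵀ * W = 1 →
      Real.sqrt (∑ j ∈ Finset.univ.filter (fun j : Fin r => d ≤ (j : ℕ)), s j / n)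
        ≤ twoInfNorm (Xhat * W - Real.sqrt ρ • X) := by
  intro W _
  have hdr : d < r := by omega
  have hrank : (Xhat * W).rank ≤ d := (rank_mul_le_left _ _).trans <|
    rank_le_of_col_eq_zero Xhat fun i j hj => by simp [hXhat, not_lt.2 hj]
  rw [hX, ← sum_div]
  calc √((∑ j ∈ univ.filter (fun j : Fin r => d ≤ (j : ℕ)), s j) / n)
      ≤ √((∑ i, ∑ j, (Xhat * W - U * diagonal fun j => √(s j)) i j ^ 2) / n) := by
        gcongr
        exact sum_filter_le_sum_sq_sub_of_rank_le hdr hU (fun j => (hs_pos j).le) hs_sorted hrank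
    _ ≤ twoInfNorm (Xhat * W - U * diagonal fun j => √(s j)) :=
        sqrt_sum_sq_div_le_twoInfNorm _

/-- If the embedding dimension `d = r + k` (with `-r < k < 0`) is chosen
too small, the `(2,∞)`-estimation error of the zero-padded adjacency spectral embedding is
bounded below by `sqrt (∑_{j=r+k+1}^r s_j / n)`. -/
theorem stmt0
    (n r : ℕ) (hn : 0 < n) (hr : 0 < r) (hrn : r ≤ n)
    (k : ℤ) (hk₁ : -(r : ℤ) < k) (hk₂ : k < 0)
    (d : ℕ) (hd : (d : ℤ) = (r : ℤ) + k)
    -- the rank-r psd matrix P = ρ • X Xᵀ and its spectral decomposition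
    (ρ : ℝ) (hρ : 0 < ρ)
    (X U : Matrix (Fin n) (Fin r) ℝ) (s : Fin r → ℝ)
    (hU : Uᵀ * U = 1)
    (hs_pos : ∀ j, 0 < s j) (hs_sorted : Antitone s)
    (hP : ρ • (X * Xᵀ) = U * diagonal s * Uᵀ)
    (hrank : (ρ • (X * Xᵀ)).rank = r)
    -- ρ^{1/2} X = U S^{1/2}
    (hX : Real.sqrt ρ • X = U * diagonal (fun j => Real.sqrt (s j)))
    -- A = P + E is any real symmetric matrix, with spectral decomposition
    (E : Matrix (Fin n) (Fin n) ℝ) (hE : Eᵀ = E)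
    (Uhat : Matrix (Fin n) (Fin n) ℝ) (shat : Fin n → ℝ)
    (hUhat : Uhatᵀ * Uhat = 1) (hshat : Antitone shat)
    (hA : ρ • (X * Xᵀ) + E = Uhat * diagonal shat * Uhatᵀ)
    -- the (r+k)-dimensional ASE of A, padded with |k| columns of zeros
    (Xhat : Matrix (Fin n) (Fin r) ℝ)
    (hXhat : Xhat = Matrix.of fun i (j : Fin r) =>
      if (j : ℕ) < d then
        Uhat i (Fin.castLE hrn j) * Real.sqrt |shat (Fin.castLE hrn j)|
      else 0) :
    ∀ W : Matrix (Fin r) (Fin r) ℝ, Wᵀ * W = 1 →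
      Real.sqrt (∑ j ∈ Finset.univ.filter (fun j : Fin r => d ≤ (j : ℕ)), s j / n)
        ≤ twoInfNorm (Xhat * W - Real.sqrt ρ • X) :=
  stmt0_general n r hrn k hk₂ d hd ρ X U s hU hs_pos hs_sorted hX Uhat shat Xhat hXhat

end
end

section
/- Let n, r, k be positive integers. Let P = ρ_n X Xᵀ be an n×n real symmetric positive semidefinite matrix of rank r with spectral decomposition P = U_{1:r} S_{1:r} U_{1:r}ᵀ, so that ρ_n^{1/2} X = U_{1:r} S_{1:r}^{1/2}, and let A = P + E be a real symmetric n×n matrix. Let X̂_{1:r+k} = Û_{1:r+k} |Ŝ|_{1:r+k}^{1/2} be the (r+k)-dimensional adjacency spectral embedding of A, and let X_{1:r+k} ∈ ℝ^{n×(r+k)} denote X_{1:r} padded on the right with k columns of zeros. Suppose there exist W* ∈ O(r) and φ ≥ 0 such that ‖X̂_{1:r} W* − ρ_n^{1/2} X_{1:r}‖_{2,∞} ≤ φ. Then there exists W ∈ O(r+k) such that ‖X̂_{1:r+k} W − ρ_n^{1/2} X_{1:r+k}‖_{2,∞} ≤ φ + ‖Û_{r+1:r+k}‖_{2,∞} ·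 ‖E‖^{1/2}, where Û_{r+1:r+k} is the matrix of eigenvectors of A with indices r+1 through r+k and ‖E‖ is the spectral norm of E. -/
/-!
Take `W = diag(W*, I_k)`. On the first `r` columns the error matrix is exactly the one in the
hypothesis, and its last `k` columns are `Û_{r+1:r+k} |Ŝ_{r+1:r+k}|^{1/2}`; splitting each row and
using `√(a + b) ≤ √a + √b` bounds the `(2,∞)`-norm by the sum of the two blocks. It then suffices
that `|λ_m(A)| ≤ ‖E‖` for every eigenvalue of `A` after the `r`-th. Since `P ⪰ 0`,
`λ_m(A) = u_mᵀ A u_m ≥ u_mᵀ E u_m ≥ -‖E‖`. Conversely (Weyl), the span of the first `m > r`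
eigenvectors of `A` meets the kernel of the rank-`r` matrix `P` nontrivially, and on a unit
vector `v` there `λ_m(A) ≤ vᵀ A v = vᵀ E v ≤ ‖E‖`.
-/

open Matrix

noncomputable section

/-- The spectral (ℓ²-operator) norm of a square real matrix. -/
def specNorm {n : ℕ} (M : Matrix (Fin n) (Fin n) ℝ) : ℝ :=
  ‖Matrix.toEuclideanCLM (𝕜 := ℝ) M‖

lemma Real.sqrt_add_le_add_sqrt {a b : ℝ} (ha : 0 ≤ a) (hb : 0 ≤ b) : √(a + b) ≤ √a + √b := by
  rw [Real.sqrt_le_left (by positivity), add_sq, Real.sq_sqrt ha, Real.sq_sqrt hb]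
  nlinarith [Real.sqrt_nonneg a, Real.sqrt_nonneg b]

lemma abs_dotProduct_mulVec_le_specNorm {n : ℕ} (M : Matrix (Fin n) (Fin n) ℝ) (v : Fin n → ℝ) :
    |v ⬝ᵥ M *ᵥ v| ≤ specNorm M * (v ⬝ᵥ v) := by
  set x : EuclideanSpace ℝ (Fin n) := WithLp.toLp 2 v
  have hquad : v ⬝ᵥ M *ᵥ v = inner ℝ x (toEuclideanCLM (𝕜 := ℝ) M x) := by
    rw [toEuclideanCLM_toLp, EuclideanSpace.inner_eq_star_dotProduct, dotProduct_comm]; rfl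
  have hnorm : v ⬝ᵥ v = ‖x‖ ^ 2 := by
    rw [← real_inner_self_eq_norm_sq, EuclideanSpace.inner_eq_star_dotProduct]; rfl
  rw [hquad, hnorm]
  calc |inner ℝ x (toEuclideanCLM (𝕜 := ℝ) M x)|
      ≤ ‖x‖ * ‖toEuclideanCLM (𝕜 := ℝ) M x‖ := abs_real_inner_le_norm _ _
    _ ≤ ‖x‖ * (specNorm M * ‖x‖) := by gcongr; exact (toEuclideanCLM (𝕜 := ℝ) M).le_opNorm x
    _ = specNorm M * ‖x‖ ^ 2 := by ring

section QuadraticForm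

variable {ι κ R : Type*} [Fintype ι] [Fintype κ] [DecidableEq κ] [CommRing R]

lemma dotProduct_mulVec_conj_diagonal (Q : Matrix ι κ R) (d : κ → R) (v : ι → R) :
    v ⬝ᵥ (Q * diagonal d * Qᵀ) *ᵥ v = ∑ a, d a * (Qᵀ *ᵥ v) a ^ 2 := by
  rw [← mulVec_mulVec, ← mulVec_mulVec, dotProduct_mulVec, ← mulVec_transpose]
  simp only [dotProduct, mulVec_diagonal]
  exact Finset.sum_congr rfl fun a _ => by ring

variable {Q : Matrix ι κ R}

lemma transpose_mulVec_mulVec_of_orthonormal (hQ : Qᵀ * Q = 1) (c : κ → R) :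
    Qᵀ *ᵥ Q *ᵥ c = c := by
  rw [mulVec_mulVec, hQ, one_mulVec]

lemma mulVec_dotProduct_mulVec_of_orthonormal (hQ : Qᵀ * Q = 1) (c : κ → R) :
    Q *ᵥ c ⬝ᵥ Q *ᵥ c = c ⬝ᵥ c := by
  rw [dotProduct_mulVec, ← mulVec_transpose, transpose_mulVec_mulVec_of_orthonormal hQ]

lemma dotProduct_mulVec_conj_diagonal_of_orthonormal (hQ : Qᵀ * Q = 1) (d : κ → R) (c : κ → R) :
    Q *ᵥ c ⬝ᵥ (Q * diagonal d * Qᵀ) *ᵥ Q *ᵥ c = ∑ a, d a * c a ^ 2 := by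
  rw [dotProduct_mulVec_conj_diagonal, transpose_mulVec_mulVec_of_orthonormal hQ]

end QuadraticForm

lemma exists_ne_zero_mulVec_eq_zero_of_le {K : Type*} [Field K] {r n : ℕ}
    (B : Matrix (Fin r) (Fin n) K) (m : Fin n) (hm : r ≤ m) :
    ∃ c : Fin n → K, c ≠ 0 ∧ (∀ j, m < j → c j = 0) ∧ B *ᵥ c = 0 := by
  set emb : Fin (m + 1) → Fin n := Fin.castLE m.isLt
  have hemb : Function.Injective emb := Fin.castLE_injective _
  set f := B.mulVecLin ∘ₗ Function.ExtendByZero.linearMap K emb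
  obtain ⟨c', hc'ker, hc'⟩ := Submodule.exists_mem_ne_zero_of_ne_bot <|
    LinearMap.ker_ne_bot_of_finrank_lt (f := f) (by simp only [Module.finrank_fin_fun]; omega)
  refine ⟨Function.extend emb c' 0, fun h => hc' ?_, fun j hj => ?_, hc'ker⟩
  · exact Function.extend_injective hemb 0 (h.trans (Function.extend_zero emb).symm)
  · refine Function.extend_apply' _ _ _ ?_
    rintro ⟨i, rfl⟩
    exact absurd hj (not_lt.2 (Fin.le_def.2 (Nat.lt_succ_iff.1 i.isLt)))

section Eigenvalues

variable {n r : ℕ} {U : Matrix (Fin n) (Fin r) ℝ} {s : Fin r → ℝ}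
  {E Uhat : Matrix (Fin n) (Fin n) ℝ} {shat : Fin n → ℝ}

lemma sum_mul_sq_eq_of_spectral (hUhat : Uhatᵀ * Uhat = 1)
    (hA : U * diagonal s * Uᵀ + E = Uhat * diagonal shat * Uhatᵀ) (c : Fin n → ℝ) :
    ∑ j, shat j * c j ^ 2 =
      ∑ a, s a * ((Uᵀ * Uhat) *ᵥ c) a ^ 2 + Uhat *ᵥ c ⬝ᵥ E *ᵥ Uhat *ᵥ c := by
  rw [← dotProduct_mulVec_conj_diagonal_of_orthonormal hUhat, ← hA, add_mulVec, dotProduct_add,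
    dotProduct_mulVec_conj_diagonal, mulVec_mulVec]

lemma neg_specNorm_le_of_spectral (hs : ∀ a, 0 ≤ s a) (hUhat : Uhatᵀ * Uhat = 1)
    (hA : U * diagonal s * Uᵀ + E = Uhat * diagonal shat * Uhatᵀ) (m : Fin n) :
    -specNorm E ≤ shat m := by
  have hsum := sum_mul_sq_eq_of_spectral hUhat hA (Pi.single m 1)
  have hE := abs_dotProduct_mulVec_le_specNorm E (Uhat *ᵥ Pi.single m 1)
  have hP : 0 ≤ ∑ a, s a * ((Uᵀ * Uhat) *ᵥ Pi.single m 1) a ^ 2 :=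
    Finset.sum_nonneg fun a _ => mul_nonneg (hs a) (sq_nonneg _)
  have hsingle_sum : ∑ j, shat j * (Pi.single m 1 : Fin n → ℝ) j ^ 2 = shat m := by
    simp [Pi.single_apply]
  have hsingle_norm : (Pi.single m 1 : Fin n → ℝ) ⬝ᵥ Pi.single m 1 = 1 := by simp
  rw [mulVec_dotProduct_mulVec_of_orthonormal hUhat, hsingle_norm, mul_one] at hE
  rw [hsingle_sum] at hsum
  linarith [abs_le.1 hE]

lemma le_specNorm_of_spectral (hUhat : Uhatᵀ * Uhat = 1) (hshat : Antitone shat)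
    (hA : U * diagonal s * Uᵀ + E = Uhat * diagonal shat * Uhatᵀ) (m : Fin n) (hm : r ≤ m) :
    shat m ≤ specNorm E := by
  obtain ⟨c, hc0, hc_zero, hUc⟩ := exists_ne_zero_mulVec_eq_zero_of_le (Uᵀ * Uhat) m hm
  have hsum := sum_mul_sq_eq_of_spectral hUhat hA c
  have hE := abs_dotProduct_mulVec_le_specNorm E (Uhat *ᵥ c)
  rw [mulVec_dotProduct_mulVec_of_orthonormal hUhat] at hE
  have hP : ∑ a, s a * ((Uᵀ * Uhat) *ᵥ c) a ^ 2 = 0 := by simp [hUc]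
  have hlow : shat m * (c ⬝ᵥ c) ≤ ∑ j, shat j * c j ^ 2 := by
    rw [dotProduct, Finset.mul_sum]
    refine Finset.sum_le_sum fun j _ => ?_
    rcases le_or_gt j m with hjm | hmj
    · rw [← sq]; exact mul_le_mul_of_nonneg_right (hshat hjm) (sq_nonneg _)
    · simp [hc_zero j hmj]
  have hpos : 0 < c ⬝ᵥ c := by simpa using dotProduct_self_star_pos_iff.2 hc0
  exact le_of_mul_le_mul_right (by linarith [abs_le.1 hE]) hpos

lemma abs_le_specNorm_of_spectral (hs : ∀ a, 0 ≤ s a) (hUhat : Uhatᵀ * Uhat = 1)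
    (hshat : Antitone shat) (hA : U * diagonal s * Uᵀ + E = Uhat * diagonal shat * Uhatᵀ)
    (m : Fin n) (hm : r ≤ m) : |shat m| ≤ specNorm E :=
  abs_le.2 ⟨neg_specNorm_le_of_spectral hs hUhat hA m, le_specNorm_of_spectral hUhat hshat hA m hm⟩

end Eigenvalues

section TwoInfNorm

variable {n m : ℕ}

lemma twoInfNorm_nonneg (Z : Matrix (Fin n) (Fin m) ℝ) : 0 ≤ twoInfNorm Z :=
  Real.iSup_nonneg fun _ => Real.sqrt_nonneg _

lemma sqrt_sum_sq_le_twoInfNorm (Z : Matrix (Fin n) (Fin m) ℝ) (i : Fin n) :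
    √(∑ j, Z i j ^ 2) ≤ twoInfNorm Z :=
  le_ciSup (f := fun i => √(∑ j, Z i j ^ 2)) (Set.finite_range _).bddAbove i

lemma twoInfNorm_le_add {r k : ℕ} (Z : Matrix (Fin n) (Fin (r + k)) ℝ) :
    twoInfNorm Z ≤
      twoInfNorm (Z.submatrix id (Fin.castAdd k)) + twoInfNorm (Z.submatrix id (Fin.natAdd r)) := by
  refine Real.iSup_le (fun i => ?_) (add_nonneg (twoInfNorm_nonneg _) (twoInfNorm_nonneg _))
  rw [Fin.sum_univ_add]
  exact (Real.sqrt_add_le_add_sqrt (by positivity) (by positivity)).trans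
    (add_le_add (sqrt_sum_sq_le_twoInfNorm (Z.submatrix id (Fin.castAdd k)) i)
      (sqrt_sum_sq_le_twoInfNorm (Z.submatrix id (Fin.natAdd r)) i))

lemma twoInfNorm_le_mul_sqrt {Z B : Matrix (Fin n) (Fin m) ℝ} {e : ℝ}
    (h : ∀ i j, Z i j ^ 2 ≤ B i j ^ 2 * e) : twoInfNorm Z ≤ twoInfNorm B * √e := by
  refine Real.iSup_le (fun i => ?_) (mul_nonneg (twoInfNorm_nonneg _) (Real.sqrt_nonneg _))
  calc √(∑ j, Z i j ^ 2) ≤ √((∑ j, B i j ^ 2) * e) :=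
        Real.sqrt_le_sqrt (by rw [Finset.sum_mul]; exact Finset.sum_le_sum fun j _ => h i j)
    _ = √(∑ j, B i j ^ 2) * √e := Real.sqrt_mul (by positivity) _
    _ ≤ twoInfNorm B * √e := by gcongr; exact sqrt_sum_sq_le_twoInfNorm B i

end TwoInfNorm

section PadWithIdentity

variable {R : Type*} [CommRing R] {r k : ℕ}

def padWithIdentity (W : Matrix (Fin r) (Fin r) R) (k : ℕ) : Matrix (Fin (r + k)) (Fin (r + k)) R :=
  reindex finSumFinEquiv finSumFinEquiv (fromBlocks W 0 0 1)

lemma padWithIdentity_transpose_mul_self {W : Matrix (Fin r) (Fin r) R} (hW : Wᵀ * W = 1) :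
    (padWithIdentity W k)ᵀ * padWithIdentity W k = 1 := by
  simp only [padWithIdentity, reindex_apply, transpose_submatrix, submatrix_mul_equiv,
    fromBlocks_transpose, fromBlocks_multiply]
  simp [hW, fromBlocks_one]

variable {n : ℕ} (Y : Matrix (Fin n) (Fin (r + k)) R) (W : Matrix (Fin r) (Fin r) R)

lemma mul_padWithIdentity_apply_castAdd (i : Fin n) (a : Fin r) :
    (Y * padWithIdentity W k) i (Fin.castAdd k a) = (Y.submatrix id (Fin.castAdd k) * W) i a := by
  simp [padWithIdentity, mul_apply, Fin.sum_univ_add]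

lemma mul_padWithIdentity_apply_natAdd (i : Fin n) (b : Fin k) :
    (Y * padWithIdentity W k) i (Fin.natAdd r b) = Y i (Fin.natAdd r b) := by
  simp [padWithIdentity, mul_apply, Fin.sum_univ_add, one_apply]

end PadWithIdentity

/-- If the embedding dimension `r + k` (with `k > 0`) is chosen too large
and the correctly specified `r`-dimensional ASE has `(2,∞)` error at most `φ` (after the
orthogonal rotation `W*`), then there is an orthogonal `W ∈ O(r+k)` with
`‖X̂_{1:r+k} W − ρ^{1/2} X_{1:r+k}‖_{2,∞} ≤ φ + ‖Û_{r+1:r+k}‖_{2,∞} ‖E‖^{1/2}`. -/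
theorem stmt1
    (n r k : ℕ) (hrkn : r + k ≤ n)
    -- the rank-r psd matrix P = ρ • X Xᵀ and its spectral decomposition
    (ρ : ℝ)
    (X U : Matrix (Fin n) (Fin r) ℝ) (s : Fin r → ℝ)
    (hs_pos : ∀ j, 0 < s j)
    (hP : ρ • (X * Xᵀ) = U * diagonal s * Uᵀ)
    -- A = P + E is a real symmetric matrix, with spectral decomposition
    (E : Matrix (Fin n) (Fin n) ℝ)
    (Uhat : Matrix (Fin n) (Fin n) ℝ) (shat : Fin n → ℝ)
    (hUhat : Uhatᵀ * Uhat = 1) (hshat : Antitone shat)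
    (hA : ρ • (X * Xᵀ) + E = Uhat * diagonal shat * Uhatᵀ)
    -- hypothesis: the r-dimensional ASE is φ-accurate after rotation by W*
    (φ : ℝ)
    (Wstar : Matrix (Fin r) (Fin r) ℝ) (hWstar : Wstarᵀ * Wstar = 1)
    (hhyp : twoInfNorm
        ((Matrix.of fun i (j : Fin r) =>
            Uhat i (Fin.castLE (by omega : r ≤ n) j) *
              Real.sqrt |shat (Fin.castLE (by omega : r ≤ n) j)|) * Wstar
          - Real.sqrt ρ • X) ≤ φ) :
    ∃ W : Matrix (Fin (r + k)) (Fin (r + k)) ℝ, Wᵀ * W = 1 ∧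
      twoInfNorm
        ((Matrix.of fun i (j : Fin (r + k)) =>
            Uhat i (Fin.castLE hrkn j) * Real.sqrt |shat (Fin.castLE hrkn j)|) * W
          - Matrix.of fun i (j : Fin (r + k)) =>
              if h : (j : ℕ) < r then (Real.sqrt ρ • X) i ⟨(j : ℕ), h⟩ else 0)
        ≤ φ +
          twoInfNorm (Matrix.of fun i (j : Fin k) => Uhat i ⟨r + (j : ℕ), by omega⟩) *
            Real.sqrt (specNorm E) := by
  rw [hP] at hA
  refine ⟨padWithIdentity Wstar k, padWithIdentity_transpose_mul_self hWstar,
    (twoInfNorm_le_add _).trans (add_le_add (le_of_eq_of_le ?_ hhyp) ?_)⟩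
  · congr 1
    ext i a
    simp only [Matrix.sub_apply, submatrix_apply, id_eq, mul_padWithIdentity_apply_castAdd, of_apply,
      Fin.val_castAdd, Fin.is_lt, ↓reduceDIte, Fin.eta]
    rfl
  · refine twoInfNorm_le_mul_sqrt fun i b => ?_
    have hb : Fin.castLE hrkn (Fin.natAdd r b) = ⟨r + b, by omega⟩ := rfl
    simp only [Matrix.sub_apply, submatrix_apply, id_eq, mul_padWithIdentity_apply_natAdd, of_apply, hb,
      Fin.val_natAdd, add_lt_iff_neg_left, not_lt_zero, ↓reduceDIte, sub_zero]
    rw [mul_pow, Real.sq_sqrt (abs_nonneg _)]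
    exact mul_le_mul_of_nonneg_left (abs_le_specNorm_of_spectral (fun j => (hs_pos j).le)
      hUhat hshat hA _ (Nat.le_add_right r b)) (sq_nonneg _)

end
end
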